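/- Let Γ be a simplicial complex on [n] such that its symmetric algebraic shift Δ(Γ) is defined, and fix i, r with 0 ≤ r ≤ i. There is a bijection between the set A_{i,r}(I_Γ) = { m ∈ ℕ^[i+1,n] of degree r : y_i^{i-r}·m ∈ B(I_Γ), y_{i+1}^{i-r+1}·m ∉ B(I_Γ) } and the set of facets F of Δ(Γ) with |F| = i, [i-r] ⊆ F, and i-r+1 ∉ F, given by m ↦ [i-r] ∪ supp(Φ(m)). -/

import Mathlib

/-- A monomial in variables `y_i` (`i : ℕ`), identified with its exponent vector. -/
abbrev Mono : Type := ℕ →₀ ℕ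

/-- Total degree of a monomial. -/
def mdeg (m : Mono) : ℕ := m.sum fun _ e => e

/-- The set of monomials `m·ℕ^σ`, i.e. products of `m` with monomials supported on `σ`. -/
def pairSet (m : Mono) (σ : Finset ℕ) : Set Mono :=
  { x | ∃ t : Mono, t.support ⊆ σ ∧ x = m + t }

/-- `m·ℕ^σ` is an admissible pair of (the complement of) `B`:
`supp m ∩ σ = ∅` and `m·ℕ^σ ⊆ B`. -/
def Admissible (B : Set Mono) (m : Mono) (σ : Finset ℕ) : Prop :=
  Disjoint m.support σ ∧ pairSet m σ ⊆ B

/-- A standard pair: an inclusion-maximal admissible pair. -/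
def IsStandardPair (B : Set Mono) (m : Mono) (σ : Finset ℕ) : Prop :=
  Admissible B m σ ∧
    ∀ (m' : Mono) (σ' : Finset ℕ), Admissible B m' σ' →
      pairSet m σ ⊆ pairSet m' σ' → pairSet m σ = pairSet m' σ'

/-- `B` is shifted: if `1 ≤ j < i` and `y_i·m ∈ B` then `y_j·m ∈ B`. -/
def ShiftedSet (B : Set Mono) : Prop :=
  ∀ (m : Mono) (i j : ℕ), 1 ≤ j → j < i →
    m + Finsupp.single i 1 ∈ B → m + Finsupp.single j 1 ∈ B

/-- `B` is an order ideal of monomials: closed under divisibility. -/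
def IsOrderIdeal (B : Set Mono) : Prop := ∀ m ∈ B, ∀ m' : Mono, m' ≤ m → m' ∈ B

/-- All monomials of `B` involve only the variables `y_1, ..., y_n`. -/
def SupportedIn (B : Set Mono) (n : ℕ) : Prop := ∀ m ∈ B, m.support ⊆ Finset.Icc 1 n

/-- `m·ℕ^{i} ⊆ B`: all products of `m` with powers of `y_i` lie in `B`
(for `i = 0` this just means `m ∈ B`, the convention `ℕ^{∅} = {1}`). -/
def VarTower (B : Set Mono) (m : Mono) (i : ℕ) : Prop :=
  if i = 0 then m ∈ B else ∀ t : ℕ, m + Finsupp.single i t ∈ B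

/-- `A_i(B) = { m ∈ ℕ^[i+1,n] : m·ℕ^{i} ⊆ B, m·ℕ^{i+1} ⊄ B }`. -/
def Aset (B : Set Mono) (n i : ℕ) : Set Mono :=
  { m | m.support ⊆ Finset.Icc (i + 1) n ∧ VarTower B m i ∧ ¬ VarTower B m (i + 1) }

/-- Property (B4): if `m ∈ B ∩ ℕ^[k,n]` has degree `≥ k` then `m·ℕ^{k} ⊆ B`. -/
def HasB4 (B : Set Mono) (n : ℕ) : Prop :=
  ∀ (k : ℕ) (m : Mono), 1 ≤ k → m ∈ B → m.support ⊆ Finset.Icc k n → k ≤ mdeg m →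
    ∀ t : ℕ, m + Finsupp.single k t ∈ B

/-- The list of variable indices of `m` with multiplicity, in increasing order. -/
def expandList (m : Mono) : List ℕ :=
  (m.support.sort (· ≤ ·)).flatMap fun i => List.replicate (m i) i

/-- The support of `Φ(m)`, where `Φ` is the unique degree- and reverse-lex-order-
preserving bijection from monomials to squarefree monomials (in variables indexed
by `ℤ`) with `Φ(y_0^k) = y_{-k+1}⋯y_0`: if `m = y_{i_1}⋯y_{i_r}` with
`i_1 ≤ ⋯ ≤ i_r`, then `Φ(m) = y_{i_1-(r-1)} y_{i_2-(r-2)} ⋯ y_{i_r}`. -/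
def phiSupp (m : Mono) : Finset ℤ :=
  ((((expandList m).zipIdx.map Prod.swap)).map fun p =>
    (p.2 : ℤ) + (p.1 : ℤ) - (((expandList m).length : ℤ) - 1)).toFinset

/-- The face (subset of positive integers) corresponding to `Φ(m)`. -/
def phiFace (m : Mono) : Finset ℕ := (phiSupp m).image Int.toNat

/-- A facet is a maximal face. -/
def IsFacet (Γ : Set (Finset ℕ)) (F : Finset ℕ) : Prop :=
  F ∈ Γ ∧ ∀ G ∈ Γ, F ⊆ G → F = G

open List

noncomputable def toMono (L : List ℕ) : Mono := Multiset.toFinsupp (↑L)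

lemma toMono_apply (L : List ℕ) (j : ℕ) : toMono L j = L.count j := by
  simp [toMono]

lemma toMono_nil : toMono [] = 0 := by ext j; simp [toMono_apply]

lemma toMono_cons (a : ℕ) (T : List ℕ) :
    toMono (a :: T) = Finsupp.single a 1 + toMono T := by
  ext j
  rw [Finsupp.add_apply, toMono_apply, toMono_apply, List.count_cons, Finsupp.single_apply]
  by_cases h : j = a <;> simp [h] <;> omega

lemma mdeg_add (a b : Mono) : mdeg (a + b) = mdeg a + mdeg b := by
  simpa [mdeg] using Finsupp.sum_add_index' (h := fun _ e => e) (by simp) (by simp)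

lemma mdeg_single (i t : ℕ) : mdeg (Finsupp.single i t) = t := by
  simp [mdeg, Finsupp.sum_single_index]

lemma mdeg_toMono (L : List ℕ) : mdeg (toMono L) = L.length := by
  induction L with
  | nil => simp [toMono_nil, mdeg]
  | cons a T ih => simp [toMono_cons, mdeg_add, mdeg_single, ih]; omega

lemma sorted_replicate (n a : ℕ) : (List.replicate n a).Pairwise (· ≤ ·) := by
  induction n with
  | zero => simp
  | succ k ih =>
    rw [List.replicate_succ, List.pairwise_cons]
    exact ⟨fun b hb => le_of_eq (List.eq_of_mem_replicate hb).symm, ih⟩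

lemma count_expandList (m : Mono) (j : ℕ) : (expandList m).count j = m j := by
  unfold expandList
  have hnd : (m.support.sort (· ≤ ·)).Nodup := m.support.sort_nodup _
  have key : ∀ s : List ℕ, s.Nodup →
      ((s.flatMap fun i => List.replicate (m i) i).count j) = if j ∈ s then m j else 0 := by
    intro s hs
    induction s with
    | nil => simp
    | cons a T ih =>
      simp only [List.flatMap_cons, List.count_append, List.count_replicate]
      rw [ih hs.of_cons]
      by_cases h : j = a
      · subst h
        simp [List.mem_cons, hs.notMem]
      · simp [h, Ne.symm h]
  rw [key _ hnd]
  by_cases h : j ∈ m.support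
  · simp [h]
  · simp [h, Finsupp.notMem_support_iff.mp h]

lemma toMono_expandList (m : Mono) : toMono (expandList m) = m := by
  ext j; rw [toMono_apply, count_expandList]

lemma mem_expandList {m : Mono} {j : ℕ} : j ∈ expandList m ↔ m j ≠ 0 := by
  rw [← List.count_pos_iff, count_expandList]; omega

lemma sorted_flatMap_replicate (c : ℕ → ℕ) (s : List ℕ) (hs : s.Pairwise (· ≤ ·)) :
    (s.flatMap fun i => List.replicate (c i) i).Pairwise (· ≤ ·) := by
  induction s with
  | nil => simp
  | cons a T ih =>
    simp only [List.flatMap_cons]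
    refine List.pairwise_append.mpr ⟨sorted_replicate _ _, ih hs.of_cons, ?_⟩
    intro x hx y hy
    obtain rfl := List.eq_of_mem_replicate hx
    obtain ⟨b, hb, hyb⟩ := List.mem_flatMap.mp hy
    obtain rfl := List.eq_of_mem_replicate hyb
    exact (List.rel_of_pairwise_cons hs) hb

lemma sorted_expandList (m : Mono) : (expandList m).Pairwise (· ≤ ·) :=
  sorted_flatMap_replicate _ _ (m.support.pairwise_sort _)

lemma length_expandList (m : Mono) : (expandList m).length = mdeg m := by
  conv_rhs => rw [← toMono_expandList m, mdeg_toMono]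

lemma expandList_toMono {L : List ℕ} (hL : L.Pairwise (· ≤ ·)) : expandList (toMono L) = L := by
  apply List.Perm.eq_of_pairwise' (sorted_expandList _) hL
  rw [List.perm_iff_count]
  intro j
  rw [count_expandList, toMono_apply]

lemma expandList_add_single {m : Mono} {c t : ℕ} (hc : ∀ j ∈ m.support, c ≤ j) :
    expandList (m + Finsupp.single c t) = List.replicate t c ++ expandList m := by
  have h1 : m + Finsupp.single c t = toMono (List.replicate t c ++ expandList m) := by
    ext j
    rw [Finsupp.add_apply, toMono_apply, List.count_append, List.count_replicate,
      count_expandList, Finsupp.single_apply]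
    by_cases h : j = c <;> simp [h, Ne.symm] <;> omega
  rw [h1, expandList_toMono]
  refine List.pairwise_append.mpr ⟨sorted_replicate _ _, sorted_expandList m, ?_⟩
  intro x hx y hy
  obtain rfl := List.eq_of_mem_replicate hx
  exact hc y (Finsupp.mem_support_iff.mpr (mem_expandList.mp hy))

/-! ### the offset list `gL` -/

def gL : List ℕ → ℤ → List ℤ
  | [], _ => []
  | a :: T, c => ((a : ℤ) + c) :: gL T (c + 1)

@[simp] lemma gL_nil (c : ℤ) : gL [] c = [] := rfl
@[simp] lemma gL_cons (a : ℕ) (T : List ℕ) (c : ℤ) :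
    gL (a :: T) c = ((a : ℤ) + c) :: gL T (c + 1) := rfl

@[simp] lemma gL_length : ∀ (L : List ℕ) (c : ℤ), (gL L c).length = L.length
  | [], _ => rfl
  | a :: T, c => by simp [gL_length T]

lemma gL_append : ∀ (A B : List ℕ) (c : ℤ),
    gL (A ++ B) c = gL A c ++ gL B (c + A.length) := by
  intro A
  induction A with
  | nil => simp
  | cons a T ih =>
    intro B c
    simp only [List.cons_append, gL_cons, ih, List.length_cons]
    congr 2
    push_cast
    ring

lemma gL_lb {b : ℕ} : ∀ {L : List ℕ} {c : ℤ}, (∀ x ∈ L, b ≤ x) →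
    ∀ y ∈ gL L c, (b : ℤ) + c ≤ y := by
  intro L
  induction L with
  | nil => simp
  | cons a T ih =>
    intro c hb y hy
    rcases List.mem_cons.mp hy with rfl | hy'
    · have : b ≤ a := hb a (by simp)
      push_cast; omega
    · have := ih (fun x hx => hb x (by simp [hx])) y hy'
      omega

lemma gL_sorted : ∀ {L : List ℕ} {c : ℤ}, L.Pairwise (· ≤ ·) → (gL L c).Pairwise (· < ·) := by
  intro L
  induction L with
  | nil => simp
  | cons a T ih =>
    intro c hs
    rw [gL_cons, List.pairwise_cons]
    refine ⟨?_, ih hs.of_cons⟩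
    intro y hy
    have := gL_lb (b := a) (fun x hx => List.rel_of_pairwise_cons hs hx) y hy
    omega

lemma gL_inj : ∀ {L₁ L₂ : List ℕ} {c : ℤ}, gL L₁ c = gL L₂ c → L₁ = L₂ := by
  intro L₁
  induction L₁ with
  | nil => intro L₂ c h; cases L₂ with
    | nil => rfl
    | cons b T => simp at h
  | cons a T ih =>
    intro L₂ c h
    cases L₂ with
    | nil => simp at h
    | cons b T₂ =>
      simp only [gL_cons, List.cons.injEq] at h
      obtain ⟨h1, h2⟩ := h
      have hab : a = b := by omega
      rw [hab, ih h2]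

lemma gL_mono : ∀ {L₁ L₂ : List ℕ} {c : ℤ},
    List.Forall₂ (· ≤ ·) (gL L₁ c) (gL L₂ c) → List.Forall₂ (· ≤ ·) L₁ L₂ := by
  intro L₁
  induction L₁ with
  | nil => intro L₂ c h; cases L₂ with
    | nil => exact List.Forall₂.nil
    | cons b T => rw [gL_cons] at h; cases h
  | cons a T ih =>
    intro L₂ c h
    cases L₂ with
    | nil => rw [gL_cons] at h; cases h
    | cons b T₂ =>
      simp only [gL_cons] at h
      cases h with
      | cons hab htail => exact List.Forall₂.cons (by omega) (ih htail)

lemma gL_replicate : ∀ (t : ℕ) (c : ℕ) (c₀ : ℤ),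
    gL (List.replicate t c) c₀ = (List.range t).map fun k : ℕ => (c : ℤ) + c₀ + (k : ℤ) := by
  intro t
  induction t with
  | zero => simp
  | succ s ih =>
    intro c c₀
    rw [List.replicate_succ, gL_cons, ih, List.range_succ_eq_map]
    rw [List.map_cons, List.map_map]
    congr 1
    · push_cast; ring
    · apply List.map_congr_left
      intro k _
      simp only [Function.comp_apply]
      push_cast; ring

def phiList (m : Mono) : List ℤ := gL (expandList m) (1 - (mdeg m : ℤ))

lemma enumFrom_map_gL : ∀ (L : List ℕ) (k : ℕ) (D : ℤ),
    (((L.zipIdx k).map Prod.swap).map fun p => (p.2 : ℤ) + (p.1 : ℤ) - D) = gL L ((k : ℤ) - D) := by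
  intro L
  induction L with
  | nil => simp
  | cons a T ih =>
    intro k D
    rw [List.zipIdx_cons, List.map_cons, List.map_cons, gL_cons, ih (k + 1) D]
    congr 1
    · simp only [Prod.swap_prod_mk]; ring
    · congr 1; push_cast; ring

lemma phiSupp_eq_phiList (m : Mono) : phiSupp m = (phiList m).toFinset := by
  unfold phiSupp phiList
  congr 1
  rw [enumFrom_map_gL, length_expandList]
  congr 1
  push_cast
  ring

lemma phiList_sorted (m : Mono) : (phiList m).Pairwise (· < ·) :=
  gL_sorted (sorted_expandList m)

lemma phiList_nodup (m : Mono) : (phiList m).Nodup :=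
  (phiList_sorted m).nodup

lemma phiList_length (m : Mono) : (phiList m).length = mdeg m := by
  rw [phiList, gL_length, length_expandList]

lemma card_phiSupp (m : Mono) : (phiSupp m).card = mdeg m := by
  rw [phiSupp_eq_phiList, List.toFinset_card_of_nodup (phiList_nodup m), phiList_length]

lemma mem_phiSupp_iff {m : Mono} {z : ℤ} : z ∈ phiSupp m ↔ z ∈ phiList m := by
  rw [phiSupp_eq_phiList, List.mem_toFinset]

lemma phiSupp_lb {m : Mono} {b : ℕ} (hb : ∀ j ∈ m.support, b ≤ j) :
    ∀ z ∈ phiSupp m, (b : ℤ) + 1 - mdeg m ≤ z := by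
  intro z hz
  have hz' := mem_phiSupp_iff.mp hz
  have := gL_lb (b := b) (L := expandList m) (c := 1 - (mdeg m : ℤ))
    (fun x hx => hb x (Finsupp.mem_support_iff.mpr (mem_expandList.mp hx))) z hz'
  omega

lemma phiList_add_single {m : Mono} {c t : ℕ} (hc : ∀ j ∈ m.support, c ≤ j)
    (hdeg : c = mdeg m + t) :
    phiList (m + Finsupp.single c t) =
      ((List.range t).map fun k : ℕ => (k : ℤ) + 1) ++ phiList m := by
  unfold phiList
  rw [expandList_add_single hc, mdeg_add, mdeg_single, gL_append, gL_replicate,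
    List.length_replicate]
  congr 1
  · apply List.map_congr_left
    intro k _
    have : (c : ℤ) = (mdeg m : ℤ) + t := by exact_mod_cast hdeg
    rw [this]; push_cast; ring
  · congr 1; push_cast; ring

lemma image_toNat_IccZ (t : ℕ) :
    (Finset.Icc (1 : ℤ) (t : ℤ)).image Int.toNat = Finset.Icc 1 t := by
  ext a
  simp only [Finset.mem_image, Finset.mem_Icc]
  constructor
  · rintro ⟨z, ⟨h1, h2⟩, rfl⟩; omega
  · intro ⟨h1, h2⟩; exact ⟨(a : ℤ), by constructor <;> omega, by omega⟩

lemma phiSupp_add_single {m : Mono} {c t : ℕ} (hc : ∀ j ∈ m.support, c ≤ j)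
    (hdeg : c = mdeg m + t) :
    phiSupp (m + Finsupp.single c t) = Finset.Icc (1 : ℤ) (t : ℤ) ∪ phiSupp m := by
  rw [phiSupp_eq_phiList, phiList_add_single hc hdeg, List.toFinset_append,
    phiSupp_eq_phiList]
  congr 1
  ext z
  simp only [List.mem_toFinset, List.mem_map, List.mem_range, Finset.mem_Icc]
  constructor
  · rintro ⟨k, hk, rfl⟩; omega
  · intro ⟨h1, h2⟩
    refine ⟨(z - 1).toNat, by omega, by omega⟩

lemma phiFace_add_single {m : Mono} {c t : ℕ} (hc : ∀ j ∈ m.support, c ≤ j)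
    (hdeg : c = mdeg m + t) :
    phiFace (m + Finsupp.single c t) = Finset.Icc 1 t ∪ phiFace m := by
  rw [phiFace, phiSupp_add_single hc hdeg, Finset.image_union, image_toNat_IccZ, phiFace]

lemma phiSupp_coe_image {m : Mono} (hpos : ∀ z ∈ phiSupp m, (1 : ℤ) ≤ z) :
    (phiFace m).image (fun a : ℕ => (a : ℤ)) = phiSupp m := by
  rw [phiFace, Finset.image_image]
  ext z
  simp only [Finset.mem_image, Function.comp_apply]
  constructor
  · rintro ⟨w, hw, rfl⟩
    have := hpos w hw
    rwa [Int.toNat_of_nonneg (by omega)]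
  · intro hz
    exact ⟨z, hz, Int.toNat_of_nonneg (by linarith [hpos z hz])⟩

lemma card_phiFace {m : Mono} (hpos : ∀ z ∈ phiSupp m, (1 : ℤ) ≤ z) :
    (phiFace m).card = mdeg m := by
  rw [← card_phiSupp, phiFace]
  apply Finset.card_image_of_injOn
  intro x hx y hy hxy
  have := hpos x hx; have := hpos y hy
  omega

lemma uniq_of_phiSupp {m₁ m₂ : Mono} (hd : mdeg m₁ = mdeg m₂)
    (hs : phiSupp m₁ = phiSupp m₂) : m₁ = m₂ := by
  have hperm : phiList m₁ ~ phiList m₂ := by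
    apply List.perm_of_nodup_nodup_toFinset_eq (phiList_nodup m₁) (phiList_nodup m₂)
    rw [← phiSupp_eq_phiList, ← phiSupp_eq_phiList, hs]
  have heq : phiList m₁ = phiList m₂ :=
    List.Perm.eq_of_pairwise'
      ((phiList_sorted m₁).imp le_of_lt) ((phiList_sorted m₂).imp le_of_lt) hperm
  unfold phiList at heq
  rw [hd] at heq
  have := gL_inj heq
  rw [← toMono_expandList m₁, ← toMono_expandList m₂, this]

lemma shifted_dom {B : Set Mono} (h1 : ShiftedSet B) :
    ∀ {L₁ L₂ : List ℕ} (c : Mono), List.Forall₂ (fun a b => 1 ≤ a ∧ a ≤ b) L₁ L₂ →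
      c + toMono L₂ ∈ B → c + toMono L₁ ∈ B := by
  intro L₁ L₂ c hf
  induction hf generalizing c with
  | nil => exact fun h => h
  | @cons a b T₁ T₂ hab htail ih =>
    intro hB
    obtain ⟨h1a, hab'⟩ := hab
    rw [toMono_cons] at hB
    rw [← add_assoc] at hB
    have step1 : c + Finsupp.single b 1 + toMono T₁ ∈ B := ih _ hB
    rw [toMono_cons, ← add_assoc]
    rcases eq_or_lt_of_le hab' with rfl | hlt
    · exact step1
    · have : (c + toMono T₁) + Finsupp.single b 1 ∈ B := by
        rw [add_right_comm] at step1; exact step1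
      have := h1 (c + toMono T₁) b a h1a hlt this
      rwa [add_right_comm] at this

lemma toMono_le_of_sublist {V W : List ℕ} (h : V <+ W) : toMono V ≤ toMono W := by
  rw [Finsupp.le_def]
  intro j
  rw [toMono_apply, toMono_apply]
  exact h.count_le j

lemma sublist_of_subset_sorted : ∀ (L₂ L₁ : List ℤ), L₁.Pairwise (· < ·) → L₂.Pairwise (· < ·) →
    (∀ x ∈ L₁, x ∈ L₂) → L₁ <+ L₂ := by
  intro L₂
  induction L₂ with
  | nil =>
    intro L₁ _ _ hsub
    cases L₁ with
    | nil => exact List.Sublist.refl _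
    | cons x T => exact absurd (hsub x (by simp)) (by simp)
  | cons y T₂ ih =>
    intro L₁ hs₁ hs₂ hsub
    cases L₁ with
    | nil => exact List.nil_sublist _
    | cons x T₁ =>
      have hx : x ∈ y :: T₂ := hsub x (by simp)
      by_cases hxy : x = y
      · subst hxy
        apply List.Sublist.cons_cons
        apply ih T₁ hs₁.of_cons hs₂.of_cons
        intro e he
        have hex : x < e := List.rel_of_pairwise_cons hs₁ he
        rcases List.mem_cons.mp (hsub e (by simp [he])) with rfl | h'
        · omega
        · exact h'
      · have hxT₂ : x ∈ T₂ := by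
          rcases List.mem_cons.mp hx with h | h
          · exact absurd h hxy
          · exact h
        have hyx : y < x := List.rel_of_pairwise_cons hs₂ hxT₂
        apply List.Sublist.cons
        apply ih (x :: T₁) hs₁ hs₂.of_cons
        intro e he
        rcases List.mem_cons.mp he with rfl | he'
        · exact hxT₂
        · have : x < e := List.rel_of_pairwise_cons hs₁ he'
          rcases List.mem_cons.mp (hsub e (by simp [he'])) with rfl | h'
          · omega
          · exact h'

lemma gsub : ∀ (W : List ℕ) (c : ℤ) (S : List ℤ), S <+ gL W c →
    ∃ V, V <+ W ∧ List.Forall₂ (· ≤ ·) S (gL V (c + W.length - V.length)) := by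
  intro W
  induction W with
  | nil =>
    intro c S hS
    rw [gL_nil, List.sublist_nil] at hS
    subst hS
    exact ⟨[], List.Sublist.refl _, List.Forall₂.nil⟩
  | cons a T ih =>
    intro c S hS
    rw [gL_cons] at hS
    cases hS with
    | cons _ h =>
      obtain ⟨V, hV, hf⟩ := ih (c + 1) S h
      refine ⟨V, hV.cons a, ?_⟩
      have : c + (↑(a :: T).length) - ↑V.length = c + 1 + ↑T.length - ↑V.length := by
        simp only [List.length_cons]; push_cast; ring
      rw [this]
      exact hf
    | cons_cons _ h =>
      obtain ⟨V, hV, hf⟩ := ih (c + 1) _ h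
      refine ⟨a :: V, hV.cons_cons a, ?_⟩
      have hVT : V.length ≤ T.length := hV.length_le
      rw [gL_cons]
      refine List.Forall₂.cons ?_ ?_
      · simp only [List.length_cons]
        push_cast
        omega
      · have : c + (↑(a :: T).length) - ↑(a :: V).length + 1
            = c + 1 + ↑T.length - ↑V.length := by
          simp only [List.length_cons]; push_cast; ring
        rw [this]
        exact hf

lemma consdom : ∀ (T : List ℤ) (x a : ℤ), x ≤ a → (x :: T).Pairwise (· ≤ ·) →
    List.Forall₂ (· ≤ ·) (x :: T) (T.orderedInsert (· ≤ ·) a) := by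
  intro T
  induction T with
  | nil => intro x a hxa _; exact List.Forall₂.cons hxa List.Forall₂.nil
  | cons y T' ih =>
    intro x a hxa hs
    rw [List.orderedInsert]
    split_ifs with h
    · exact List.Forall₂.cons hxa
        (List.Forall₂.cons (le_refl y) (List.forall₂_refl _))
    · refine List.Forall₂.cons (List.rel_of_pairwise_cons hs (by simp)) ?_
      exact ih y a (by omega) hs.of_cons

lemma insdom : ∀ (L : List ℤ) (b a : ℤ), b ≤ a → L.Pairwise (· ≤ ·) →
    List.Forall₂ (· ≤ ·) (L.orderedInsert (· ≤ ·) b) (L.orderedInsert (· ≤ ·) a) := by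
  intro L
  induction L with
  | nil => intro b a hba _; exact List.Forall₂.cons hba List.Forall₂.nil
  | cons x T ih =>
    intro b a hba hs
    rw [List.orderedInsert, List.orderedInsert]
    split_ifs with h1 h2 h2
    · exact List.Forall₂.cons hba
        (List.Forall₂.cons (le_refl x) (List.forall₂_refl _))
    · refine List.Forall₂.cons h1 ?_
      exact consdom T x a (by omega) hs
    · omega
    · exact List.Forall₂.cons (le_refl x) (ih b a hba hs.of_cons)

lemma orderedInsert_append {b : ℤ} : ∀ (A T : List ℤ), (∀ x ∈ A, ¬ b ≤ x) →
    (∀ x ∈ T, b ≤ x) → (A ++ T).orderedInsert (· ≤ ·) b = A ++ b :: T := by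
  intro A
  induction A with
  | nil =>
    intro T _ hT
    cases T with
    | nil => rfl
    | cons y T' =>
      rw [List.nil_append, List.orderedInsert, if_pos (hT y (by simp))]
      rfl
  | cons x A' ih =>
    intro T hA hT
    rw [List.cons_append, List.orderedInsert, if_neg (hA x (by simp)),
      ih T (fun z hz => hA z (by simp [hz])) hT]
    rfl

lemma forall2_strengthen {U V : List ℕ} (h : List.Forall₂ (· ≤ ·) U V)
    (hU : ∀ x ∈ U, 1 ≤ x) : List.Forall₂ (fun a b => 1 ≤ a ∧ a ≤ b) U V := by
  induction h with
  | nil => exact List.Forall₂.nil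
  | @cons a b T₁ T₂ hab htail ih =>
    exact List.Forall₂.cons ⟨hU a (by simp), hab⟩ (ih fun x hx => hU x (by simp [hx]))

lemma sorted_lt_of_le_nodup {L : List ℤ} (hs : L.Pairwise (· ≤ ·)) (hn : L.Nodup) :
    L.Pairwise (· < ·) := by
  have := List.Pairwise.and hs hn
  exact this.imp fun h => lt_of_le_of_ne h.1 h.2

lemma forall2_le_trans {L₁ L₂ L₃ : List ℤ} (h1 : List.Forall₂ (· ≤ ·) L₁ L₂)
    (h2 : List.Forall₂ (· ≤ ·) L₂ L₃) : List.Forall₂ (· ≤ ·) L₁ L₃ := by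
  induction h1 generalizing L₃ with
  | nil => cases h2; exact List.Forall₂.nil
  | @cons a b T₁ T₂ hab htail ih =>
    cases h2 with
    | cons hbc htail₂ => exact List.Forall₂.cons (le_trans hab hbc) (ih htail₂)

/-! ### the inverse construction `gInv` -/

def gInv : List ℕ → ℕ → List ℕ
  | [], _ => []
  | a :: T, c => (a + c) :: gInv T (c - 1)

@[simp] lemma gInv_length : ∀ (L : List ℕ) (c : ℕ), (gInv L c).length = L.length
  | [], _ => rfl
  | a :: T, c => by simp [gInv, gInv_length T]

lemma gInv_lb : ∀ {L : List ℕ} {c b : ℕ}, (∀ x ∈ L, b ≤ x) → L.Pairwise (· < ·) →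
    ∀ y ∈ gInv L c, b + c ≤ y := by
  intro L
  induction L with
  | nil => simp [gInv]
  | cons a T ih =>
    intro c b hb hs y hy
    rw [gInv] at hy
    rcases List.mem_cons.mp hy with rfl | hy'
    · have := hb a (by simp); omega
    · have hT : ∀ x ∈ T, b + 1 ≤ x := by
        intro x hx
        have := List.rel_of_pairwise_cons hs hx
        have := hb a (by simp)
        omega
      have := ih (c := c - 1) hT hs.of_cons y hy'
      omega

lemma gInv_sorted : ∀ {L : List ℕ} {c : ℕ}, L.Pairwise (· < ·) → (gInv L c).Pairwise (· ≤ ·) := by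
  intro L
  induction L with
  | nil => simp [gInv]
  | cons a T ih =>
    intro c hs
    rw [gInv, List.pairwise_cons]
    refine ⟨?_, ih hs.of_cons⟩
    intro y hy
    have hT : ∀ x ∈ T, a + 1 ≤ x := fun x hx => List.rel_of_pairwise_cons hs hx
    have := gInv_lb (c := c - 1) hT hs.of_cons y hy
    omega

lemma gL_gInv : ∀ (L : List ℕ), gL (gInv L (L.length - 1)) (1 - (L.length : ℤ))
    = L.map (fun a : ℕ => (a : ℤ)) := by
  intro L
  induction L with
  | nil => simp [gInv]
  | cons a T ih =>
    have hlen : (a :: T).length - 1 = T.length := by simp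
    rw [hlen, gInv]
    have hc : T.length - 1 - 0 = T.length - 1 := by omega
    rw [gL_cons, List.map_cons]
    congr 1
    · simp only [List.length_cons]; push_cast; ring
    · have harg : 1 - ((a :: T).length : ℤ) + 1 = 1 - (T.length : ℤ) := by
        simp only [List.length_cons]; push_cast; ring
      rw [harg, ih]

/-! ### the key maximality step -/

lemma maximal_step {n i r : ℕ} (hr : r ≤ i) {B : Set Mono} (h1 : ShiftedSet B)
    (h2 : IsOrderIdeal B) {m w : Mono}
    (hs : m.support ⊆ Finset.Icc (i + 1) n) (hd : mdeg m = r)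
    (hw : w ∈ B) (hwpos : ∀ z ∈ phiSupp w, (1:ℤ) ≤ z)
    {a : ℕ} (haG : a ∈ phiFace w) (haF : a ∉ Finset.Icc 1 (i - r) ∪ phiFace m)
    (hFG : Finset.Icc 1 (i - r) ∪ phiFace m ⊆ phiFace w) :
    m + Finsupp.single (i + 1) (i - r + 1) ∈ B := by
  set t₁ := i - r with ht₁
  have hc_i : ∀ j ∈ m.support, i ≤ j := fun j hj => by
    have := Finset.mem_Icc.mp (hs hj); omega
  have hc_i1 : ∀ j ∈ m.support, i + 1 ≤ j := fun j hj => by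
    have := Finset.mem_Icc.mp (hs hj); omega
  have hdeg_i : i = mdeg m + t₁ := by omega
  have hdeg_i1 : i + 1 = mdeg m + (t₁ + 1) := by omega
  -- positivity of phiSupp m
  have hposm : ∀ z ∈ phiSupp m, ((t₁ : ℤ)) + 2 ≤ z := by
    intro z hz
    have := phiSupp_lb hc_i1 z hz
    rw [hd] at this
    omega
  -- the lists
  have hP : phiList (m + Finsupp.single i t₁)
      = ((List.range t₁).map fun k : ℕ => (k : ℤ) + 1) ++ phiList m :=
    phiList_add_single hc_i hdeg_i
  have hPu : phiList (m + Finsupp.single (i+1) (t₁+1))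
      = ((List.range (t₁+1)).map fun k : ℕ => (k : ℤ) + 1) ++ phiList m :=
    phiList_add_single hc_i1 hdeg_i1
  -- the extra vertex
  obtain ⟨z, hzw, hza⟩ := Finset.mem_image.mp haG
  have hz1 : (1 : ℤ) ≤ z := hwpos z hzw
  have hαz : (a : ℤ) = z := by omega
  have hαw : (a : ℤ) ∈ phiSupp w := hαz ▸ hzw
  have hba : ((t₁ + 1 : ℕ) : ℤ) ≤ (a : ℤ) := by
    have ha1 : 1 ≤ a := by omega
    have hanotIcc : a ∉ Finset.Icc 1 t₁ := fun h => haF (Finset.mem_union_left _ h)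
    rw [Finset.mem_Icc] at hanotIcc
    push_cast
    omega
  -- `Pu = orderedInsert b P`
  have hoI : (phiList (m + Finsupp.single i t₁)).orderedInsert (· ≤ ·) ((t₁ + 1 : ℕ) : ℤ)
      = phiList (m + Finsupp.single (i+1) (t₁+1)) := by
    rw [hP, hPu, orderedInsert_append]
    · rw [List.range_succ, List.map_append, List.append_assoc]
      push_cast
      rfl
    · intro x hx
      obtain ⟨k, hk, rfl⟩ := List.mem_map.mp hx
      rw [List.mem_range] at hk
      push_cast; omega
    · intro x hx
      have := hposm x (mem_phiSupp_iff.mpr hx)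
      push_cast; omega
  -- positivity of phiSupp (m + single i t₁), and its face is F
  have hsupp_ms : phiSupp (m + Finsupp.single i t₁)
      = Finset.Icc (1:ℤ) (t₁ : ℤ) ∪ phiSupp m := phiSupp_add_single hc_i hdeg_i
  have hpos_ms : ∀ x ∈ phiSupp (m + Finsupp.single i t₁), (1:ℤ) ≤ x := by
    intro x hx
    rw [hsupp_ms, Finset.mem_union] at hx
    rcases hx with hx | hx
    · exact (Finset.mem_Icc.mp hx).1
    · have := hposm x hx; omega
  have hface_ms : phiFace (m + Finsupp.single i t₁) = Finset.Icc 1 t₁ ∪ phiFace m :=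
    phiFace_add_single hc_i hdeg_i
  -- α ∉ P
  have hαP : (a : ℤ) ∉ phiList (m + Finsupp.single i t₁) := by
    intro hmem
    have : a ∈ phiFace (m + Finsupp.single i t₁) := by
      rw [phiFace]
      refine Finset.mem_image.mpr ⟨(a:ℤ), mem_phiSupp_iff.mpr hmem, by omega⟩
    rw [hface_ms] at this
    exact haF this
  set P := phiList (m + Finsupp.single i t₁) with hPdef
  set S' := P.orderedInsert (· ≤ ·) (a : ℤ) with hS'def
  have hperm : S' ~ (a : ℤ) :: P := List.perm_orderedInsert _ _ P
  have hPsortle : P.Pairwise (· ≤ ·) := (phiList_sorted _).imp le_of_lt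
  have hS'sortle : S'.Pairwise (· ≤ ·) := hPsortle.orderedInsert _ _
  have hS'nodup : S'.Nodup := hperm.nodup_iff.mpr (by
    rw [List.nodup_cons]; exact ⟨hαP, phiList_nodup _⟩)
  have hS'sortlt : S'.Pairwise (· < ·) := sorted_lt_of_le_nodup hS'sortle hS'nodup
  have hforall1 : List.Forall₂ (· ≤ ·) (phiList (m + Finsupp.single (i+1) (t₁+1))) S' := by
    rw [← hoI, hS'def]
    exact insdom P _ _ hba hPsortle
  -- S' is a sublist of phiList w
  have hsubset : ∀ x ∈ S', x ∈ phiList w := by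
    intro x hx
    rw [hperm.mem_iff, List.mem_cons] at hx
    rcases hx with rfl | hx
    · exact mem_phiSupp_iff.mp hαw
    · have hxs : x ∈ phiSupp (m + Finsupp.single i t₁) := mem_phiSupp_iff.mpr hx
      have hx1 : (1:ℤ) ≤ x := hpos_ms x hxs
      have hxface : x.toNat ∈ phiFace w := by
        apply hFG
        rw [← hface_ms, phiFace]
        exact Finset.mem_image.mpr ⟨x, hxs, rfl⟩
      obtain ⟨z', hz'w, hz'⟩ := Finset.mem_image.mp hxface
      have := hwpos z' hz'w
      have : z' = x := by omega
      exact mem_phiSupp_iff.mp (this ▸ hz'w)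
  have hsl : S' <+ phiList w :=
    sublist_of_subset_sorted _ _ hS'sortlt (phiList_sorted w) hsubset
  -- extract a dominating sub-multiset of w
  rw [phiList] at hsl
  obtain ⟨V, hV, hf2⟩ := gsub _ _ _ hsl
  have hlenS' : S'.length = i + 1 := by
    rw [hperm.length_eq, List.length_cons, hPdef, phiList_length, mdeg_add, mdeg_single]
    omega
  have hlenV : V.length = i + 1 := by
    have := hf2.length_eq
    rw [gL_length] at this
    omega
  have harg : 1 - (mdeg w : ℤ) + ((expandList w).length : ℤ) - (V.length : ℤ)
      = 1 - ((i + 1 : ℕ) : ℤ) := by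
    rw [length_expandList, hlenV]; push_cast; ring
  rw [harg] at hf2
  -- the chain of dominations
  set u := m + Finsupp.single (i+1) (t₁+1) with hudef
  have hmdegu : mdeg u = i + 1 := by rw [hudef, mdeg_add, mdeg_single]; omega
  have hPugL : phiList u = gL (expandList u) (1 - ((i+1 : ℕ) : ℤ)) := by
    rw [phiList, hmdegu]
  have hchain : List.Forall₂ (· ≤ ·) (gL (expandList u) (1 - ((i+1 : ℕ) : ℤ)))
      (gL V (1 - ((i+1 : ℕ) : ℤ))) := by
    rw [← hPugL]
    exact forall2_le_trans hforall1 hf2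
  have hUV : List.Forall₂ (· ≤ ·) (expandList u) V := gL_mono hchain
  have hU1 : ∀ x ∈ expandList u, 1 ≤ x := by
    intro x hx
    have := mem_expandList.mp hx
    rw [hudef] at this
    by_cases hxm : m x = 0
    · have : Finsupp.single (i+1) (t₁+1) x ≠ 0 := by
        intro h0
        apply this
        rw [Finsupp.add_apply, hxm, h0]
      rw [Finsupp.single_apply_ne_zero] at this
      omega
    · have := hc_i1 x (Finsupp.mem_support_iff.mpr hxm)
      omega
  have hVB : toMono V ∈ B := by
    apply h2 w hw
    rw [← toMono_expandList w]
    exact toMono_le_of_sublist hV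
  have : (0 : Mono) + toMono (expandList u) ∈ B := by
    apply shifted_dom h1 0 (forall2_strengthen hUV hU1)
    rwa [zero_add]
  rwa [zero_add, toMono_expandList] at this

lemma image_coe_Icc (a b : ℕ) :
    (Finset.Icc a b).image (fun x : ℕ => (x : ℤ)) = Finset.Icc (a : ℤ) (b : ℤ) := by
  ext z
  simp only [Finset.mem_image, Finset.mem_Icc]
  constructor
  · rintro ⟨x, ⟨h1, h2⟩, rfl⟩; constructor <;> omega
  · intro ⟨h1, h2⟩; exact ⟨z.toNat, by omega, by omega⟩

/-- Bijection between `A_{i,r}(I_Γ)` and the facets `F` of the symmetric shift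
`Δ(Γ)` with `|F| = i`, `[i-r] ⊆ F`, `i-r+1 ∉ F`, via `m ↦ [i-r] ∪ supp Φ(m)`.
Here `B` plays the role of the standard monomials `B(I_Γ) = ℕ^[n] ∖ Gin(I_Γ)`
(a shifted order ideal in `ℕ^[n]` satisfying (B4)), and `Δ` is the simplicial
complex with `y^Δ = Φ(B) ∩ ℕ^[1,∞]`. -/
theorem Aset_bijOn_facets
    (n i r : ℕ) (hr : r ≤ i) (B : Set Mono)
    (h1 : ShiftedSet B) (h2 : IsOrderIdeal B) (h3 : SupportedIn B n)
    (h4 : HasB4 B n) (Δ : Set (Finset ℕ))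
    (hΔ : ∀ F : Finset ℕ, F ∈ Δ ↔
      ∃ m ∈ B, (∀ z ∈ phiSupp m, (1 : ℤ) ≤ z) ∧ F = phiFace m) :
    Set.BijOn (fun m => Finset.Icc 1 (i - r) ∪ phiFace m)
      { m : Mono | m.support ⊆ Finset.Icc (i + 1) n ∧ mdeg m = r ∧
          m + Finsupp.single i (i - r) ∈ B ∧
          m + Finsupp.single (i + 1) (i - r + 1) ∉ B }
      { F | IsFacet Δ F ∧ F.card = i ∧ Finset.Icc 1 (i - r) ⊆ F ∧
          (i - r + 1) ∉ F } := by
  have hface_lb : ∀ m : Mono, m.support ⊆ Finset.Icc (i + 1) n → mdeg m = r →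
      (∀ z ∈ phiSupp m, ((i - r : ℕ) : ℤ) + 2 ≤ z) ∧
      (∀ a ∈ phiFace m, i - r + 2 ≤ a) := by
    intro m hs hd
    have hc_i1 : ∀ j ∈ m.support, i + 1 ≤ j := fun j hj => by
      have := Finset.mem_Icc.mp (hs hj); omega
    have hz : ∀ z ∈ phiSupp m, ((i - r : ℕ) : ℤ) + 2 ≤ z := by
      intro z hzz
      have := phiSupp_lb hc_i1 z hzz
      rw [hd] at this
      omega
    refine ⟨hz, ?_⟩
    intro a ha
    obtain ⟨z, hzz, rfl⟩ := Finset.mem_image.mp ha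
    have := hz z hzz
    omega
  refine ⟨?_, ?_, ?_⟩
  · -- MapsTo
    rintro m ⟨hs, hd, hB1, hB2⟩
    obtain ⟨hposm, hflb⟩ := hface_lb m hs hd
    have hc_i : ∀ j ∈ m.support, i ≤ j := fun j hj => by
      have := Finset.mem_Icc.mp (hs hj); omega
    have hc_i1 : ∀ j ∈ m.support, i + 1 ≤ j := fun j hj => by
      have := Finset.mem_Icc.mp (hs hj); omega
    have hdeg_i : i = mdeg m + (i - r) := by omega
    have hface : phiFace (m + Finsupp.single i (i - r))
        = Finset.Icc 1 (i - r) ∪ phiFace m := phiFace_add_single hc_i hdeg_i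
    have hsupp : phiSupp (m + Finsupp.single i (i - r))
        = Finset.Icc (1:ℤ) ((i - r : ℕ) : ℤ) ∪ phiSupp m := phiSupp_add_single hc_i hdeg_i
    have hpos_ms : ∀ z ∈ phiSupp (m + Finsupp.single i (i - r)), (1:ℤ) ≤ z := by
      intro z hz
      rw [hsupp, Finset.mem_union] at hz
      rcases hz with hz | hz
      · exact (Finset.mem_Icc.mp hz).1
      · have := hposm z hz; omega
    have hFΔ : Finset.Icc 1 (i - r) ∪ phiFace m ∈ Δ :=
      (hΔ _).mpr ⟨_, hB1, hpos_ms, hface.symm⟩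
    have hdisj : Disjoint (Finset.Icc 1 (i - r)) (phiFace m) := by
      rw [Finset.disjoint_left]
      intro a ha hb
      have := Finset.mem_Icc.mp ha
      have := hflb a hb
      omega
    refine ⟨⟨hFΔ, ?_⟩, ?_, Finset.subset_union_left, ?_⟩
    · -- maximality
      intro G hG hFG
      by_contra hne
      obtain ⟨w, hwB, hwpos, hGw⟩ := (hΔ G).mp hG
      obtain ⟨a, haG, hanF⟩ := Finset.exists_of_ssubset (lt_of_le_of_ne hFG hne)
      rw [hGw] at haG hFG
      exact hB2 (maximal_step hr h1 h2 hs hd hwB hwpos haG hanF hFG)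
    · rw [Finset.card_union_of_disjoint hdisj, Nat.card_Icc,
        card_phiFace (fun z hz => by have := hposm z hz; omega), hd]
      omega
    · intro hmem
      rcases Finset.mem_union.mp hmem with h | h
      · have := Finset.mem_Icc.mp h; omega
      · have := hflb _ h; omega
  · -- InjOn
    rintro m₁ ⟨hs₁, hd₁, -, -⟩ m₂ ⟨hs₂, hd₂, -, -⟩ heq
    simp only at heq
    obtain ⟨hpos₁, hflb₁⟩ := hface_lb m₁ hs₁ hd₁
    obtain ⟨hpos₂, hflb₂⟩ := hface_lb m₂ hs₂ hd₂
    have hfeq : phiFace m₁ = phiFace m₂ := by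
      ext a
      constructor
      · intro ha
        have haU : a ∈ Finset.Icc 1 (i - r) ∪ phiFace m₂ := heq ▸
          Finset.mem_union_right _ ha
        rcases Finset.mem_union.mp haU with h | h
        · have := Finset.mem_Icc.mp h
          have := hflb₁ a ha
          omega
        · exact h
      · intro ha
        have haU : a ∈ Finset.Icc 1 (i - r) ∪ phiFace m₁ := heq ▸
          Finset.mem_union_right _ ha
        rcases Finset.mem_union.mp haU with h | h
        · have := Finset.mem_Icc.mp h
          have := hflb₂ a ha
          omega
        · exact h
    apply uniq_of_phiSupp (hd₁.trans hd₂.symm)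
    rw [← phiSupp_coe_image (fun z hz => by have := hpos₁ z hz; omega),
      ← phiSupp_coe_image (fun z hz => by have := hpos₂ z hz; omega), hfeq]
  · -- SurjOn
    rintro F ⟨⟨hFΔ, hmax⟩, hcard, hIcc, hout⟩
    obtain ⟨w, hwB, hwpos, hFw⟩ := (hΔ F).mp hFΔ
    set S := F \ Finset.Icc 1 (i - r) with hSdef
    have hS2 : ∀ a ∈ S, i - r + 2 ≤ a := by
      intro a ha
      rw [hSdef, Finset.mem_sdiff] at ha
      obtain ⟨haF, hanIcc⟩ := ha
      have ha1 : 1 ≤ a := by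
        rw [hFw, phiFace] at haF
        obtain ⟨z, hz, rfl⟩ := Finset.mem_image.mp haF
        have := hwpos z hz
        omega
      have hane : a ≠ i - r + 1 := fun h => hout (h ▸ haF)
      rw [Finset.mem_Icc] at hanIcc
      omega
    have cardS : S.card = r := by
      rw [hSdef, Finset.card_sdiff_of_subset hIcc, hcard, Nat.card_Icc]
      omega
    set σ := S.sort (· ≤ ·) with hσdef
    have hσlt : σ.Pairwise (· < ·) := List.sortedLT_iff_pairwise.mp (Finset.sortedLT_sort S)
    have hσlen : σ.length = r := by rw [hσdef, Finset.length_sort, cardS]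
    have hσ2 : ∀ x ∈ σ, i - r + 2 ≤ x := fun x hx =>
      hS2 x ((Finset.mem_sort _).mp hx)
    set M := gInv σ (r - 1) with hMdef
    set m := toMono M with hmdef
    have hMsorted : M.Pairwise (· ≤ ·) := gInv_sorted hσlt
    have hmdeg : mdeg m = r := by rw [hmdef, mdeg_toMono, hMdef, gInv_length, hσlen]
    have hexp : expandList m = M := expandList_toMono hMsorted
    have hphiList : phiList m = σ.map (fun a : ℕ => (a : ℤ)) := by
      have h := gL_gInv σ
      rw [hσlen] at h
      rw [phiList, hexp, hmdeg, hMdef]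
      exact h
    have hphiSupp : phiSupp m = S.image (fun a : ℕ => (a : ℤ)) := by
      rw [phiSupp_eq_phiList, hphiList]
      ext z
      simp only [List.mem_toFinset, List.mem_map, Finset.mem_image, hσdef, Finset.mem_sort]
    have hphiFace : phiFace m = S := by
      rw [phiFace, hphiSupp, Finset.image_image]
      ext a
      simp only [Finset.mem_image, Function.comp_apply, Int.toNat_natCast]
      constructor
      · rintro ⟨b, hb, rfl⟩; exact hb
      · intro ha; exact ⟨a, ha, rfl⟩
    -- support of m (lower bound)
    have hmem_M : ∀ j, j ∈ m.support → j ∈ M := by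
      intro j hj
      rw [← hexp]
      exact mem_expandList.mpr (Finsupp.mem_support_iff.mp hj)
    have hlow : ∀ j ∈ m.support, i + 1 ≤ j := by
      intro j hj
      have hjM := hmem_M j hj
      have hr1 : 1 ≤ r := by
        rw [← hσlen]
        rcases σ with - | ⟨x, T⟩
        · rw [hMdef] at hjM; simp [gInv] at hjM
        · simp
      have := gInv_lb (c := r - 1) hσ2 hσlt j hjM
      omega
    have hc_i : ∀ j ∈ m.support, i ≤ j := fun j hj => by have := hlow j hj; omega
    have hdeg_i : i = mdeg m + (i - r) := by omega
    -- identify w with m·y_i^{i-r}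
    have hmdegw : mdeg w = i := by
      rw [← card_phiFace hwpos, ← hFw, hcard]
    have hFS : Finset.Icc 1 (i - r) ∪ S = F := Finset.union_sdiff_of_subset hIcc
    have hsuppw : phiSupp w = phiSupp (m + Finsupp.single i (i - r)) := by
      rw [phiSupp_add_single hc_i hdeg_i, hphiSupp,
        ← phiSupp_coe_image hwpos, ← hFw, ← hFS, Finset.image_union, image_coe_Icc]
      norm_num
    have hweq : w = m + Finsupp.single i (i - r) := by
      apply uniq_of_phiSupp _ hsuppw
      rw [hmdegw, mdeg_add, mdeg_single, hmdeg]
      omega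
    have hB1 : m + Finsupp.single i (i - r) ∈ B := hweq ▸ hwB
    -- support of m (upper bound)
    have hsub_supp : m.support ⊆ Finset.Icc (i + 1) n := by
      intro j hj
      rw [Finset.mem_Icc]
      refine ⟨hlow j hj, ?_⟩
      have hjw : j ∈ w.support := by
        rw [hweq, Finsupp.mem_support_iff, Finsupp.add_apply]
        have := Finsupp.mem_support_iff.mp hj
        omega
      exact (Finset.mem_Icc.mp (h3 w hwB hjw)).2
    -- the non-membership condition
    have hB2 : m + Finsupp.single (i + 1) (i - r + 1) ∉ B := by
      intro hin
      have hdeg_i1 : i + 1 = mdeg m + (i - r + 1) := by omega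
      have hface' : phiFace (m + Finsupp.single (i + 1) (i - r + 1))
          = Finset.Icc 1 (i - r + 1) ∪ phiFace m := phiFace_add_single hlow hdeg_i1
      have hsupp' : phiSupp (m + Finsupp.single (i + 1) (i - r + 1))
          = Finset.Icc (1:ℤ) ((i - r + 1 : ℕ) : ℤ) ∪ phiSupp m :=
        phiSupp_add_single hlow hdeg_i1
      have hpos' : ∀ z ∈ phiSupp (m + Finsupp.single (i + 1) (i - r + 1)), (1:ℤ) ≤ z := by
        intro z hz
        rw [hsupp', Finset.mem_union] at hz
        rcases hz with hz | hz
        · exact (Finset.mem_Icc.mp hz).1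
        · rw [hphiSupp] at hz
          obtain ⟨b, hb, rfl⟩ := Finset.mem_image.mp hz
          have := hS2 b hb
          omega
      have hG'Δ : Finset.Icc 1 (i - r + 1) ∪ phiFace m ∈ Δ :=
        (hΔ _).mpr ⟨_, hin, hpos', hface'.symm⟩
      have hFsub : F ⊆ Finset.Icc 1 (i - r + 1) ∪ phiFace m := by
        rw [← hFS, hphiFace]
        apply Finset.union_subset_union _ (Finset.Subset.refl _)
        exact Finset.Icc_subset_Icc (le_refl _) (by omega)
      have := hmax _ hG'Δ hFsub
      apply hout
      rw [this]
      exact Finset.mem_union_left _ (Finset.mem_Icc.mpr ⟨by omega, by omega⟩)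
    refine ⟨m, ⟨hsub_supp, hmdeg, hB1, hB2⟩, ?_⟩
    simp only
    rw [hphiFace]
    exact hFS
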